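/- Let E be an order-continuous Banach lattice and let μ be a locally finite Borel measure on ℝ^d. Then for every simple function f: ℝ^d → E, the non-dyadic lattice Hardy–Littlewood maximal function M̃^μ f(x) := sup_Q ⟨|f|⟩^μ_Q 1_Q(x), where the supremum is taken in the lattice sense over all axis-parallel cubes Q ⊆ ℝ^d, exists for μ-almost every x and defines a strongly μ-measurable function, i.e. M̃^μ f ∈ L^0(μ;E). -/

import Mathlib

open MeasureTheory ENNReal Set

attribute [local instance] Classical.propDecidable

/-- A dyadic cube in `ℝ^d`, given by a generation `k : ℤ` and a position `m : Fin d → ℤ`;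
its underlying set is `∏_i [2^k m i, 2^k (m i + 1))`. -/
structure DyadicCube (d : ℕ) where
  k : ℤ
  m : Fin d → ℤ
deriving DecidableEq

/-- The underlying set of a dyadic cube. -/
def DyadicCube.set {d : ℕ} (Q : DyadicCube d) : Set (Fin d → ℝ) :=
  {x | ∀ i, (2 : ℝ) ^ Q.k * Q.m i ≤ x i ∧ x i < (2 : ℝ) ^ Q.k * (Q.m i + 1)}

/-- A (non-dyadic) axis-parallel cube in `ℝ^d`, given by its corner and side length. -/
structure Cube (d : ℕ) where
  c : Fin d → ℝ
  len : ℝ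
  len_pos : 0 < len

/-- The underlying set of an axis-parallel cube. -/
def Cube.set {d : ℕ} (Q : Cube d) : Set (Fin d → ℝ) :=
  {x | ∀ i, Q.c i ≤ x i ∧ x i < Q.c i + Q.len}

/-- The average `⟨f⟩^μ_A = (1/μ(A)) ∫_A f dμ` of a vector-valued function. -/
noncomputable def avg {d : ℕ} {E : Type*} [NormedAddCommGroup E] [NormedSpace ℝ E]
    (μ : Measure (Fin d → ℝ)) (A : Set (Fin d → ℝ)) (f : (Fin d → ℝ) → E) : E :=
  (μ A).toReal⁻¹ • ∫ x in A, f x ∂μ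

/-- The dyadic lattice Hardy–Littlewood maximal operator
`M̃^μ_D f (x) = sup_{Q ∈ D} ⟨|f|⟩^μ_Q 1_Q(x)` (a lattice supremum of finitely many
positive elements, realized as a fold of `⊔` with base point `0`). -/
noncomputable def dyadicMaximal {d : ℕ} {E : Type*} [NormedAddCommGroup E] [Lattice E] [HasSolidNorm E] [IsOrderedAddMonoid E]
    [NormedSpace ℝ E] (μ : Measure (Fin d → ℝ)) (D : Finset (DyadicCube d))
    (f : (Fin d → ℝ) → E) (x : Fin d → ℝ) : E :=
  D.fold (· ⊔ ·) 0 fun Q => Set.indicator Q.set (fun _ => avg μ Q.set fun y => |f y|) x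

/-- A collection of dyadic cubes is sparse (w.r.t. `μ`): each `Q` in the collection carries a
measurable subset `E_Q ⊆ Q` with `μ(Q) ≤ 2 μ(E_Q)`, the subsets being pairwise disjoint. -/
def IsSparse {d : ℕ} (μ : Measure (Fin d → ℝ)) (S : Finset (DyadicCube d)) : Prop :=
  ∃ ES : DyadicCube d → Set (Fin d → ℝ),
    (∀ Q ∈ S, ES Q ⊆ Q.set ∧ MeasurableSet (ES Q) ∧ μ Q.set ≤ 2 * μ (ES Q)) ∧
    (S : Set (DyadicCube d)).Pairwise fun Q Q' => Disjoint (ES Q) (ES Q')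

/-- The sparse operator `A^μ_{q,S} f (x) = (∑_{Q ∈ S} ⟨|f|⟩_Q^q 1_Q(x))^{1/q}` acting on
scalar-valued functions. -/
noncomputable def sparseOp {d : ℕ} (μ : Measure (Fin d → ℝ)) (q : ℝ)
    (S : Finset (DyadicCube d)) (f : (Fin d → ℝ) → ℝ) (x : Fin d → ℝ) : ℝ :=
  (∑ Q ∈ S, Set.indicator Q.set (fun _ => avg μ Q.set (fun y => |f y|) ^ q) x) ^ (1 / q)

/-- `q`-convexity of a Banach lattice with constant `C`:
`‖(∑ |e k|^q)^{1/q}‖ ≤ C (∑ ‖e k‖^q)^{1/q}`. The Krivine element `(∑ |e k|^q)^{1/q}` is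
characterized as the least upper bound of all combinations `∑ a k • |e k|` where the
nonnegative coefficients `a` lie in the unit ball of the norm dual to the `ℓ^q`-norm. -/
def IsQConvexWith (E : Type*) [NormedAddCommGroup E] [Lattice E] [HasSolidNorm E] [IsOrderedAddMonoid E] [NormedSpace ℝ E]
    (q C : ℝ) : Prop :=
  ∀ (n : ℕ) (e : Fin n → E) (s : E),
    IsLUB {x : E | ∃ a : Fin n → ℝ, (∀ k, 0 ≤ a k) ∧
        (∀ t : Fin n → ℝ, (∀ k, 0 ≤ t k) → ∑ k, a k * t k ≤ (∑ k, t k ^ q) ^ (1 / q)) ∧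
        x = ∑ k, a k • |e k|} s →
    ‖s‖ ≤ C * (∑ k, ‖e k‖ ^ q) ^ (1 / q)

/-- The Hardy–Littlewood property of a Banach lattice `E`: for some `p ∈ (1,∞)` the dyadic
lattice maximal operators (w.r.t. Lebesgue measure) are bounded on `L^p(dx; E)` uniformly in
the finite collection of dyadic cubes. -/
def HasHLProperty (d : ℕ) (E : Type*) [NormedAddCommGroup E] [Lattice E] [HasSolidNorm E] [IsOrderedAddMonoid E] [NormedSpace ℝ E] : Prop :=
  ∃ p : ℝ, 1 < p ∧ ∃ C : ℝ, ∀ (D : Finset (DyadicCube d)) (f : (Fin d → ℝ) → E),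
    MemLp f (ENNReal.ofReal p) volume →
    eLpNorm (dyadicMaximal volume D f) (ENNReal.ofReal p) volume ≤
      ENNReal.ofReal C * eLpNorm f (ENNReal.ofReal p) volume

/-- Order continuity of a Banach lattice: every downward directed set with infimum `0`
contains elements of arbitrarily small norm cofinally (i.e. the corresponding decreasing net
converges to `0` in norm). -/
def IsOrderContinuous (E : Type*) [NormedAddCommGroup E] [Lattice E] [HasSolidNorm E] [IsOrderedAddMonoid E] : Prop :=
  ∀ A : Set E, A.Nonempty → DirectedOn (· ≥ ·) A → IsGLB A 0 →
    ∀ ε : ℝ, 0 < ε → ∃ a ∈ A, ∀ b ∈ A, b ≤ a → ‖b‖ < ε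


/-! Only countably many cubes matter: the average of `|f|` over any cube is a limit of averages
over cubes with rational corner and side length that contain the same point, because the
measures of `A k ∩ Q` depend continuously on `Q` when the faces move in the right direction.
The supremum over the rational cubes is the limit of the increasing sequence of its finite
partial suprema, which is bounded by `∑ k, |e k|`; in an order continuous Banach lattice such a
sequence is Cauchy, and the limit is strongly measurable as a pointwise limit of finite suprema
of measurable functions. -/

open Filter Topology Function

lemma inv_two_pow_smul_nonneg {E : Type*} [AddCommGroup E] [Lattice E] [IsOrderedAddMonoid E]
    [Module ℝ E] {z : E} (hz : 0 ≤ z) (m : ℕ) : 0 ≤ ((2 : ℝ) ^ m)⁻¹ • z := by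
  induction m with
  | zero => simpa using hz
  | succ m ih =>
    refine nsmul_two_semiclosed ?_
    rwa [← Nat.cast_smul_eq_nsmul ℝ, smul_smul, pow_succ, mul_inv, Nat.cast_ofNat,
      mul_left_comm, mul_inv_cancel₀ two_ne_zero, mul_one]

section NormedLattice

variable {E : Type*} [NormedAddCommGroup E] [Lattice E] [HasSolidNorm E] [IsOrderedAddMonoid E]
  [NormedSpace ℝ E]

/-- The positive cone is closed and stable under halving, so it contains the dyadic multiples
`⌊c 2^m⌋₊ 2^{-m} • z` of a positive `z`, and hence their limit `c • z`. -/
instance HasSolidNorm.posSMulMono : PosSMulMono ℝ E := by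
  refine PosSMulMono.of_smul_nonneg fun c hc z hz => ?_
  have hlim : Tendsto (fun m : ℕ => ((⌊c * 2 ^ m⌋₊ : ℝ) / 2 ^ m) • z) atTop (𝓝 (c • z)) :=
    ((tendsto_nat_floor_mul_div_atTop hc).comp
      (tendsto_pow_atTop_atTop_of_one_lt one_lt_two)).smul_const z
  refine ge_of_tendsto hlim (Eventually.of_forall fun m => ?_)
  rw [div_eq_mul_inv, mul_smul, Nat.cast_smul_eq_nsmul]
  exact nsmul_nonneg (inv_two_pow_smul_nonneg hz m) _

lemma nonpos_of_forall_nsmul_le {b c : E} (h : ∀ k : ℕ, k • b ≤ c) : b ≤ 0 := by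
  have hle : ∀ k : ℕ, b ≤ ((k : ℝ) + 1)⁻¹ • c := fun k => by
    have hk : (0 : ℝ) < k + 1 := k.cast_add_one_pos
    calc b = ((k : ℝ) + 1)⁻¹ • ((k + 1 : ℕ) • b) := by
          rw [← Nat.cast_smul_eq_nsmul ℝ, smul_smul, Nat.cast_add_one, inv_mul_cancel₀ hk.ne',
            one_smul]
      _ ≤ ((k : ℝ) + 1)⁻¹ • c := smul_le_smul_of_nonneg_left (h _) (inv_pos.2 hk).le
  have hlim : Tendsto (fun k : ℕ => ((k : ℝ) + 1)⁻¹ • c) atTop (𝓝 ((0 : ℝ) • c)) := by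
    simpa only [one_div] using (tendsto_one_div_add_atTop_nhds_zero_nat (𝕜 := ℝ)).smul_const c
  rw [zero_smul] at hlim
  exact ge_of_tendsto hlim (Eventually.of_forall hle)

end NormedLattice

section OrderContinuous

variable {E : Type*} [NormedAddCommGroup E] [Lattice E] [HasSolidNorm E] [IsOrderedAddMonoid E]
  [NormedSpace ℝ E]

/-- If `b` is below every `v - s n`, then `v ↦ v - b` maps upper bounds of `s` to upper bounds,
so `u - k • b` is an upper bound for every `k`, which forces `b ≤ 0`. -/
lemma isGLB_upperBounds_sub_range {s : ℕ → E} (hs : BddAbove (range s)) :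
    IsGLB (image2 (· - ·) (upperBounds (range s)) (range s)) 0 := by
  refine ⟨?_, fun b hb => ?_⟩
  · rintro _ ⟨v, hv, _, ⟨n, rfl⟩, rfl⟩
    exact sub_nonneg.2 (hv ⟨n, rfl⟩)
  obtain ⟨u, hu⟩ := hs
  have hb_le : ∀ v ∈ upperBounds (range s), ∀ n, b ≤ v - s n :=
    fun v hv n => hb ⟨v, hv, s n, ⟨n, rfl⟩, rfl⟩
  have hshift : ∀ v ∈ upperBounds (range s), v - b ∈ upperBounds (range s) := by
    rintro v hv _ ⟨n, rfl⟩
    exact le_sub_comm.1 (hb_le v hv n)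
  have hiter : ∀ k : ℕ, u - k • b ∈ upperBounds (range s) := by
    intro k
    induction k with
    | zero => simpa using hu
    | succ k ih => simpa [succ_nsmul, sub_sub] using hshift _ ih
  refine nonpos_of_forall_nsmul_le (c := u - s 0 - b) fun k => ?_
  have hk := hb_le _ (hiter k) 0
  rw [le_sub_iff_add_le, le_sub_iff_add_le] at hk ⊢
  simpa [add_comm, add_left_comm, add_assoc, sub_add_cancel] using hk

variable [CompleteSpace E]

lemma IsOrderContinuous.exists_tendsto_of_monotone (hOC : IsOrderContinuous E) {s : ℕ → E}
    (hmono : Monotone s) (hs : BddAbove (range s)) : ∃ l, Tendsto s atTop (𝓝 l) := by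
  set B := image2 (· - ·) (upperBounds (range s)) (range s)
  have hB_ne : B.Nonempty := Nonempty.image2 hs (range_nonempty s)
  have hB_dir : DirectedOn (· ≥ ·) B := by
    rintro _ ⟨v, hv, _, ⟨n, rfl⟩, rfl⟩ _ ⟨w, hw, _, ⟨n', rfl⟩, rfl⟩
    refine ⟨(v ⊓ w) - s (max n n'), ⟨v ⊓ w, fun x hx => le_inf (hv hx) (hw hx), _,
      ⟨max n n', rfl⟩, rfl⟩, ?_, ?_⟩
    · exact sub_le_sub inf_le_left (hmono (le_max_left _ _))
    · exact sub_le_sub inf_le_right (hmono (le_max_right _ _))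
  refine cauchySeq_tendsto_of_complete (Metric.cauchySeq_iff'.2 fun ε hε => ?_)
  obtain ⟨_, ⟨v, hv, _, ⟨N, rfl⟩, rfl⟩, hsmall⟩ :=
    hOC B hB_ne hB_dir (isGLB_upperBounds_sub_range hs) ε hε
  refine ⟨N, fun n hn => ?_⟩
  have h₀ : 0 ≤ s n - s N := sub_nonneg.2 (hmono hn)
  have h₁ : s n - s N ≤ v - s N := sub_le_sub_right (hv ⟨n, rfl⟩) _
  calc dist (s n) (s N) = ‖s n - s N‖ := dist_eq_norm _ _
    _ ≤ ‖v - s N‖ := norm_le_norm_of_abs_le_abs <| by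
        rwa [abs_of_nonneg h₀, abs_of_nonneg (h₀.trans h₁)]
    _ < ε := hsmall _ ⟨v, hv, _, ⟨N, rfl⟩, rfl⟩ le_rfl

lemma IsOrderContinuous.exists_isLUB_tendsto_partialSups (hOC : IsOrderContinuous E)
    {F : ℕ → E} (hF : BddAbove (range F)) :
    ∃ l, IsLUB (range F) l ∧ Tendsto (partialSups F) atTop (𝓝 l) := by
  obtain ⟨l, hl⟩ := hOC.exists_tendsto_of_monotone (partialSups F).monotone
    (bddAbove_range_partialSups.2 hF)
  refine ⟨l, ⟨?_, fun b hb => ?_⟩, hl⟩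
  · rintro _ ⟨j, rfl⟩
    exact (le_partialSups F j).trans ((partialSups F).monotone.ge_of_tendsto hl j)
  · exact le_of_tendsto' hl fun m => partialSups_le _ _ _ fun j _ => hb ⟨j, rfl⟩

end OrderContinuous

lemma MeasureTheory.StronglyMeasurable.partialSups {X E : Type*} [MeasurableSpace X]
    [TopologicalSpace E] [Lattice E] [ContinuousSup E] {F : ℕ → X → E}
    (hF : ∀ j, StronglyMeasurable (F j)) (m : ℕ) : StronglyMeasurable (partialSups F m) := by
  rw [partialSups_apply]
  exact Finset.sup'_induction _ _ (fun _ h₁ _ h₂ => h₁.sup h₂) fun j _ => hF j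

namespace Cube

variable {d : ℕ}

lemma set_eq_pi (Q : Cube d) : Q.set = univ.pi fun i => Ico (Q.c i) (Q.c i + Q.len) := by
  ext x
  simp [Cube.set]

lemma measurableSet (Q : Cube d) : MeasurableSet Q.set := by
  rw [set_eq_pi]
  exact MeasurableSet.univ_pi fun _ => measurableSet_Ico

lemma measure_lt_top (Q : Cube d) (μ : Measure (Fin d → ℝ)) [IsLocallyFiniteMeasure μ] :
    μ Q.set < ∞ :=
  (measure_mono (s := Q.set) (t := Icc Q.c fun i => Q.c i + Q.len)
    fun _ hx => ⟨fun i => (hx i).1, fun i => (hx i).2.le⟩).trans_lt isCompact_Icc.measure_lt_top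

def ofRat (p : {p : (Fin d → ℚ) × ℚ // 0 < p.2}) : Cube d :=
  ⟨fun i => p.1.1 i, p.1.2, Rat.cast_pos.2 p.2⟩

/-- Approximating corner and side length from below makes the upper faces converge from below,
as the half-open cubes require: every point eventually lies in both cubes or in neither. -/
lemma exists_seq_ofRat_tendsto (Q : Cube d) :
    ∃ p : ℕ → {p : (Fin d → ℚ) × ℚ // 0 < p.2},
      (∀ m, (ofRat (p m)).set ⊆ Icc (fun i => Q.c i - 1) (fun i => Q.c i + Q.len)) ∧
      ∀ y, ∀ᶠ m in atTop, y ∈ (ofRat (p m)).set ↔ y ∈ Q.set := by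
  have hseq : ∀ {a b : ℝ}, b < a → ∃ q : ℕ → ℚ, (∀ m, (q m : ℝ) ∈ Ioo b a) ∧
      Tendsto (fun m => (q m : ℝ)) atTop (𝓝 a) := fun hba =>
    (Rat.denseRange_cast.exists_seq_strictMono_tendsto_of_lt Rat.cast_strictMono.monotone
      hba).imp fun _ h => ⟨h.2.1, h.2.2⟩
  obtain ⟨r, hr, hr_lim⟩ := hseq Q.len_pos
  choose a ha ha_lim using fun i => hseq (sub_one_lt (Q.c i))
  have hface : ∀ i, Tendsto (fun m => (a i m : ℝ) + r m) atTop (𝓝 (Q.c i + Q.len)) :=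
    fun i => (ha_lim i).add hr_lim
  refine ⟨fun m => ⟨(fun i => a i m, r m), by exact_mod_cast (hr m).1⟩, fun m y hy => ?_,
    fun y => ?_⟩
  · exact ⟨fun i => ((ha i m).1.trans_le (hy i).1).le,
      fun i => ((hy i).2.trans (add_lt_add (ha i m).2 (hr m).2)).le⟩
  by_cases hyQ : y ∈ Q.set
  · filter_upwards [eventually_all.2 fun i => (hface i).eventually_const_lt (hyQ i).2] with m hm
    exact iff_of_true (fun i => ⟨((ha i m).2.trans_le (hyQ i).1).le, hm i⟩) hyQ
  · obtain ⟨i, hi⟩ : ∃ i, ¬(Q.c i ≤ y i ∧ y i < Q.c i + Q.len) := by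
      simpa [Cube.set] using hyQ
    rcases not_and_or.1 hi with hlow | hhigh
    · filter_upwards [(ha_lim i).eventually_const_lt (not_le.1 hlow)] with m hm
      exact iff_of_false (fun hy => (hy i).1.not_gt hm) hyQ
    · refine Eventually.of_forall fun m => iff_of_false (fun hy => ?_) hyQ
      exact hhigh ((hy i).2.trans (add_lt_add (ha i m).2 (hr m).2))

end Cube

lemma abs_sum_indicator_of_pairwise_disjoint {X E : Type*} [AddCommGroup E] [Lattice E]
    [IsOrderedAddMonoid E] {n : ℕ} {e : Fin n → E} {A : Fin n → Set X}
    (hAdisj : Pairwise (Disjoint on A)) (y : X) :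
    |∑ k, (A k).indicator (fun _ => e k) y| = ∑ k, (A k).indicator (fun _ => |e k|) y := by
  by_cases hy : ∃ k, y ∈ A k
  · obtain ⟨k, hk⟩ := hy
    have hother : ∀ j ∈ Finset.univ, j ≠ k → y ∉ A j :=
      fun j _ hj hjy => Set.disjoint_left.1 (hAdisj hj) hjy hk
    rw [Finset.sum_eq_single k (fun j hj hjk => indicator_of_notMem (hother j hj hjk) _)
        (absurd (Finset.mem_univ k)),
      Finset.sum_eq_single k (fun j hj hjk => indicator_of_notMem (hother j hj hjk) _)
        (absurd (Finset.mem_univ k)),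
      indicator_of_mem hk, indicator_of_mem hk]
  · push Not at hy
    simp [indicator_of_notMem (hy _)]

section SimpleFunction

variable {d : ℕ} {E : Type*} [NormedAddCommGroup E] [Lattice E] [IsOrderedAddMonoid E]
  [NormedSpace ℝ E] [CompleteSpace E] {μ : Measure (Fin d → ℝ)} {f : (Fin d → ℝ) → E} {n : ℕ}
  {e : Fin n → E} {A : Fin n → Set (Fin d → ℝ)}

lemma avg_abs_eq_sum (hA : ∀ k, MeasurableSet (A k)) (hAfin : ∀ k, μ (A k) < ∞)
    (hAdisj : Pairwise (Disjoint on A)) (hf : f = fun x => ∑ k, (A k).indicator (fun _ => e k) x)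
    (S : Set (Fin d → ℝ)) :
    avg μ S (fun y => |f y|) = ∑ k, ((μ.real S)⁻¹ * μ.real (A k ∩ S)) • |e k| := by
  have hint : ∀ k, Integrable ((A k).indicator fun _ => |e k|) (μ.restrict S) := fun k =>
    (integrable_indicator_iff (hA k)).2 <| integrableOn_const <|
      ((Measure.restrict_le_self _).trans_lt (hAfin k)).ne
  simp only [avg, hf, abs_sum_indicator_of_pairwise_disjoint hAdisj]
  rw [integral_finsetSum _ fun k _ => hint k, Finset.smul_sum]
  refine Finset.sum_congr rfl fun k _ => ?_
  rw [integral_indicator_const _ (hA k), measureReal_restrict_apply (hA k), smul_smul]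
  rfl

lemma tendsto_avg_abs (hA : ∀ k, MeasurableSet (A k)) (hAfin : ∀ k, μ (A k) < ∞)
    (hAdisj : Pairwise (Disjoint on A)) (hf : f = fun x => ∑ k, (A k).indicator (fun _ => e k) x)
    {ι : Type*} {l : Filter ι} [l.IsCountablyGenerated] {W : ι → Set (Fin d → ℝ)}
    (hW : ∀ i, MeasurableSet (W i)) {B : Set (Fin d → ℝ)} (hB : MeasurableSet B)
    (hBfin : μ B ≠ ∞) (hWB : ∀ i, W i ⊆ B) {S : Set (Fin d → ℝ)} (hS0 : μ S ≠ 0) (hSfin : μ S ≠ ∞)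
    (hlim : ∀ y, ∀ᶠ i in l, y ∈ W i ↔ y ∈ S) :
    Tendsto (fun i => avg μ (W i) fun y => |f y|) l (𝓝 (avg μ S fun y => |f y|)) := by
  have hmeas : ∀ X, MeasurableSet X → μ (X ∩ S) ≠ ∞ →
      Tendsto (fun i => μ.real (X ∩ W i)) l (𝓝 (μ.real (X ∩ S))) := fun X hX hXS =>
    (ENNReal.tendsto_toReal hXS).comp <| tendsto_measure_of_tendsto_indicator l
      (fun i => hX.inter (hW i)) hB hBfin
      (Eventually.of_forall fun i => inter_subset_right.trans (hWB i))
      fun y => (hlim y).mono fun i hi => and_congr_right' hi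
  have hS : Tendsto (fun i => μ.real (W i)) l (𝓝 (μ.real S)) := by
    simpa using hmeas univ MeasurableSet.univ (by simpa using hSfin)
  simp only [avg_abs_eq_sum hA hAfin hAdisj hf]
  refine tendsto_finsetSum _ fun k _ => ((hS.inv₀ ?_).mul ?_).smul_const _
  · exact (ENNReal.toReal_pos hS0 hSfin).ne'
  · simpa only [inter_comm] using hmeas (A k) (hA k)
      ((measure_mono inter_subset_left).trans_lt (hAfin k)).ne

variable [HasSolidNorm E]

lemma avg_abs_nonneg (hA : ∀ k, MeasurableSet (A k)) (hAfin : ∀ k, μ (A k) < ∞)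
    (hAdisj : Pairwise (Disjoint on A)) (hf : f = fun x => ∑ k, (A k).indicator (fun _ => e k) x)
    (S : Set (Fin d → ℝ)) : 0 ≤ avg μ S (fun y => |f y|) := by
  rw [avg_abs_eq_sum hA hAfin hAdisj hf]
  exact Finset.sum_nonneg fun k _ => smul_nonneg (by positivity) (abs_nonneg _)

lemma avg_abs_le_sum_abs (hA : ∀ k, MeasurableSet (A k)) (hAfin : ∀ k, μ (A k) < ∞)
    (hAdisj : Pairwise (Disjoint on A)) (hf : f = fun x => ∑ k, (A k).indicator (fun _ => e k) x)
    {S : Set (Fin d → ℝ)} (hS : μ S ≠ ∞) : avg μ S (fun y => |f y|) ≤ ∑ k, |e k| := by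
  rw [avg_abs_eq_sum hA hAfin hAdisj hf]
  refine Finset.sum_le_sum fun k _ => smul_le_of_le_one_left (abs_nonneg _) ?_
  exact inv_mul_le_one_of_le₀ (measureReal_mono inter_subset_right hS) measureReal_nonneg

end SimpleFunction

section CubeAverage

variable {d : ℕ} {E : Type*} [NormedAddCommGroup E] [Lattice E] [HasSolidNorm E]
  [IsOrderedAddMonoid E] [NormedSpace ℝ E] [CompleteSpace E] {μ : Measure (Fin d → ℝ)}
  {f : (Fin d → ℝ) → E} {n : ℕ} {e : Fin n → E} {A : Fin n → Set (Fin d → ℝ)}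

variable (μ f) in
noncomputable def cubeAverage (Q : Cube d) : (Fin d → ℝ) → E :=
  Q.set.indicator fun _ => avg μ Q.set fun y => |f y|

lemma cubeAverage_nonneg (hA : ∀ k, MeasurableSet (A k)) (hAfin : ∀ k, μ (A k) < ∞)
    (hAdisj : Pairwise (Disjoint on A)) (hf : f = fun x => ∑ k, (A k).indicator (fun _ => e k) x)
    (Q : Cube d) (x : Fin d → ℝ) : 0 ≤ cubeAverage μ f Q x :=
  indicator_nonneg (fun _ _ => avg_abs_nonneg hA hAfin hAdisj hf _) x

lemma cubeAverage_le_sum_abs [IsLocallyFiniteMeasure μ] (hA : ∀ k, MeasurableSet (A k))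
    (hAfin : ∀ k, μ (A k) < ∞) (hAdisj : Pairwise (Disjoint on A))
    (hf : f = fun x => ∑ k, (A k).indicator (fun _ => e k) x) (Q : Cube d) (x : Fin d → ℝ) :
    cubeAverage μ f Q x ≤ ∑ k, |e k| := by
  unfold cubeAverage
  by_cases hx : x ∈ Q.set
  · rw [indicator_of_mem hx]
    exact avg_abs_le_sum_abs hA hAfin hAdisj hf (Q.measure_lt_top μ).ne
  · rw [indicator_of_notMem hx]
    exact Finset.sum_nonneg fun k _ => abs_nonneg _

lemma cubeAverage_le_of_forall_ofRat_le [IsLocallyFiniteMeasure μ]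
    (hA : ∀ k, MeasurableSet (A k)) (hAfin : ∀ k, μ (A k) < ∞) (hAdisj : Pairwise (Disjoint on A))
    (hf : f = fun x => ∑ k, (A k).indicator (fun _ => e k) x) {x : Fin d → ℝ} {b : E}
    (hb : ∀ p, cubeAverage μ f (Cube.ofRat p) x ≤ b) (Q : Cube d) :
    cubeAverage μ f Q x ≤ b := by
  have hb0 : 0 ≤ b := (cubeAverage_nonneg hA hAfin hAdisj hf _ x).trans (hb ⟨(0, 1), one_pos⟩)
  unfold cubeAverage
  by_cases hx : x ∈ Q.set
  swap
  · rwa [indicator_of_notMem hx]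
  rw [indicator_of_mem hx]
  by_cases hQ0 : μ Q.set = 0
  -- the junk value `(0 : ℝ)⁻¹ = 0` makes the average over a null cube vanish
  · simpa [avg, hQ0] using hb0
  obtain ⟨p, hpB, hp_lim⟩ := Q.exists_seq_ofRat_tendsto
  have hlim := tendsto_avg_abs hA hAfin hAdisj hf (fun m => (Cube.ofRat (p m)).measurableSet)
    measurableSet_Icc isCompact_Icc.measure_lt_top.ne hpB hQ0 (Q.measure_lt_top μ).ne hp_lim
  refine le_of_tendsto hlim ((hp_lim x).mono fun m hm => ?_)
  simpa [cubeAverage, indicator_of_mem (hm.2 hx)] using hb (p m)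

end CubeAverage

theorem latticeMaximal_welldefined_of_simple_general
    {d : ℕ}
    (E : Type*) [NormedAddCommGroup E] [Lattice E] [HasSolidNorm E] [IsOrderedAddMonoid E] [NormedSpace ℝ E] [CompleteSpace E]
    (hOC : IsOrderContinuous E)
    (μ : Measure (Fin d → ℝ)) [IsLocallyFiniteMeasure μ]
    (f : (Fin d → ℝ) → E) (n : ℕ) (e : Fin n → E) (A : Fin n → Set (Fin d → ℝ))
    (hA : ∀ k, MeasurableSet (A k)) (hAfin : ∀ k, μ (A k) < ∞)
    (hAdisj : ∀ j k, j ≠ k → Disjoint (A j) (A k))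
    (hf : f = fun x => ∑ k, (A k).indicator (fun _ => e k) x) :
    ∃ g : (Fin d → ℝ) → E, AEStronglyMeasurable g μ ∧
      (∀ Q : Cube d, ∀ᵐ x ∂μ,
        Set.indicator Q.set (fun _ => avg μ Q.set fun y => |f y|) x ≤ g x) ∧
      ∀ h : (Fin d → ℝ) → E, AEStronglyMeasurable h μ →
        (∀ Q : Cube d, ∀ᵐ x ∂μ,
          Set.indicator Q.set (fun _ => avg μ Q.set fun y => |f y|) x ≤ h x) →
        ∀ᵐ x ∂μ, g x ≤ h x := by
  have : Nonempty {p : (Fin d → ℚ) × ℚ // 0 < p.2} := ⟨⟨(0, 1), one_pos⟩⟩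
  obtain ⟨φ, hφ⟩ := exists_surjective_nat {p : (Fin d → ℚ) × ℚ // 0 < p.2}
  set F : ℕ → (Fin d → ℝ) → E := fun j => cubeAverage μ f (Cube.ofRat (φ j))
  have hF_meas : ∀ j, StronglyMeasurable (F j) := fun j =>
    stronglyMeasurable_const.indicator (Cube.ofRat (φ j)).measurableSet
  have hF_bdd : ∀ x, BddAbove (range fun j => F j x) := fun x =>
    ⟨_, forall_mem_range.2 fun j => cubeAverage_le_sum_abs hA hAfin hAdisj hf _ x⟩
  choose g hg_lub hg_lim using fun x => hOC.exists_isLUB_tendsto_partialSups (hF_bdd x)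
  refine ⟨g, ?_, fun Q => ae_of_all _ fun x => ?_, fun h _ hh => ?_⟩
  · refine (stronglyMeasurable_of_tendsto atTop (StronglyMeasurable.partialSups hF_meas)
      (tendsto_pi_nhds.2 fun x => ?_)).aestronglyMeasurable
    simpa only [Pi.partialSups_apply] using hg_lim x
  · refine cubeAverage_le_of_forall_ofRat_le hA hAfin hAdisj hf (fun p => ?_) Q
    obtain ⟨j, rfl⟩ := hφ p
    exact (hg_lub x).1 ⟨j, rfl⟩
  · filter_upwards [ae_all_iff.2 fun j => hh (Cube.ofRat (φ j))] with x hx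
    exact (hg_lub x).2 (forall_mem_range.2 hx)

/-- Lemma 5.1 / `lemma:welldefmaximal`.
For an order-continuous Banach lattice `E` and a locally finite Borel measure `μ`, the
non-dyadic lattice Hardy–Littlewood maximal function of a simple function `f` exists
(as the least upper bound, in the μ-a.e. order, of the family `x ↦ ⟨|f|⟩^μ_Q 1_Q(x)` over
all axis-parallel cubes `Q`) and is strongly `μ`-measurable. -/
theorem latticeMaximal_welldefined_of_simple
    {d : ℕ} (hd : 1 ≤ d)
    (E : Type*) [NormedAddCommGroup E] [Lattice E] [HasSolidNorm E] [IsOrderedAddMonoid E] [NormedSpace ℝ E] [CompleteSpace E]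
    (hOC : IsOrderContinuous E)
    (μ : Measure (Fin d → ℝ)) [IsLocallyFiniteMeasure μ]
    (f : (Fin d → ℝ) → E) (n : ℕ) (e : Fin n → E) (A : Fin n → Set (Fin d → ℝ))
    (hA : ∀ k, MeasurableSet (A k)) (hAfin : ∀ k, μ (A k) < ∞)
    (hAdisj : ∀ j k, j ≠ k → Disjoint (A j) (A k))
    (hf : f = fun x => ∑ k, (A k).indicator (fun _ => e k) x) :
    ∃ g : (Fin d → ℝ) → E, AEStronglyMeasurable g μ ∧
      (∀ Q : Cube d, ∀ᵐ x ∂μ,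
        Set.indicator Q.set (fun _ => avg μ Q.set fun y => |f y|) x ≤ g x) ∧
      ∀ h : (Fin d → ℝ) → E, AEStronglyMeasurable h μ →
        (∀ Q : Cube d, ∀ᵐ x ∂μ,
          Set.indicator Q.set (fun _ => avg μ Q.set fun y => |f y|) x ≤ h x) →
        ∀ᵐ x ∂μ, g x ≤ h x :=
  latticeMaximal_welldefined_of_simple_general E hOC μ f n e A hA hAfin hAdisj hf
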